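/- arXiv:1103.5427 — 5 statements merged into one kernel-verified Lean document; each statement's English description precedes it below -/
import Mathlib

section
/- Let α be real with ‖α‖ > 0, and let f be a real-valued, continuously differentiable, monotone function on [Q, Q+P] (Q integer, P positive integer). Then |∑_{x=Q+1}^{Q+P} exp(2πiαx) f(x)| ≤ C·(|f(Q+P)| + |f(Q)|)·min(P, 1/‖α‖) for some absolute constant C. -/
open Complex Finset

/-!
Summation by parts turns the sum into `f(Q+P)` times a full exponential sum minus the increments
of `f` against partial exponential sums. Each partial sum `∑_{j<k} e(α(t+j))` is a geometric sum,
of norm at most `min(k, 2/|e(α) - 1|)`, and `|e(α) - 1| = 2|sin πα| ≥ 4‖α‖` by Jordan's inequality.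
Since `f` is monotone its increments have constant sign, so their total is `|f(Q+P) - f(Q+1)|`,
which together with the boundary term gives the bound with `C = 2`.
-/

lemma four_mul_abs_le_norm_exp_two_pi_mul_I_sub_one {β : ℝ} (hβ : |β| ≤ 1 / 2) :
    4 * |β| ≤ ‖exp (2 * Real.pi * I * β) - 1‖ := by
  have hsin : 2 / Real.pi * |Real.pi * β| ≤ |Real.sin (Real.pi * β)| :=
    Real.mul_abs_le_abs_sin <| by
      rw [abs_mul, abs_of_pos Real.pi_pos]; nlinarith [Real.pi_pos]
  rw [show 2 * Real.pi * I * β = I * (2 * Real.pi * β : ℝ) by push_cast; ring,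
    norm_exp_I_mul_ofReal_sub_one, norm_mul, Real.norm_eq_abs, Real.norm_eq_abs, abs_two,
    show 2 * Real.pi * β / 2 = Real.pi * β by ring]
  rw [abs_mul, abs_of_pos Real.pi_pos, ← mul_assoc, div_mul_cancel₀ _ Real.pi_ne_zero] at hsin
  linarith

lemma four_mul_abs_sub_round_le_norm_exp_sub_one (α : ℝ) :
    4 * |α - round α| ≤ ‖exp (2 * Real.pi * I * α) - 1‖ := by
  have hshift : exp (2 * Real.pi * I * α) = exp (2 * Real.pi * I * (α - round α : ℝ)) := by
    rw [ofReal_sub, mul_sub, exp_sub, ofReal_intCast, mul_comm _ ((round α : ℤ) : ℂ),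
      exp_int_mul_two_pi_mul_I, div_one]
  rw [hshift]
  exact four_mul_abs_le_norm_exp_two_pi_mul_I_sub_one (abs_sub_round α)

section GeomSum

variable {K : Type*} [NormedField K] {z : K}

lemma norm_geom_sum_le_of_norm_eq_one (hz : ‖z‖ = 1) (k : ℕ) :
    ‖∑ j ∈ range k, z ^ j‖ ≤ k :=
  (norm_sum_le _ _).trans <| by simp [hz]

lemma norm_geom_sum_le_two_div_of_norm_eq_one (hz : ‖z‖ = 1) (hz1 : z ≠ 1) (k : ℕ) :
    ‖∑ j ∈ range k, z ^ j‖ ≤ 2 / ‖z - 1‖ := by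
  rw [geom_sum_eq hz1, norm_div]
  gcongr
  calc ‖z ^ k - 1‖ ≤ ‖z ^ k‖ + ‖(1 : K)‖ := norm_sub_le _ _
    _ = 2 := by rw [norm_pow, hz, one_pow, norm_one]; norm_num

end GeomSum

lemma norm_sum_range_exp_le (α t : ℝ) (hα : 0 < |α - round α|) (k : ℕ) :
    ‖∑ j ∈ range k, exp (2 * Real.pi * I * α * (t + j))‖ ≤ min (k : ℝ) (1 / |α - round α|) := by
  set z := exp (2 * Real.pi * I * α)
  have hfactor : ∑ j ∈ range k, exp (2 * Real.pi * I * α * (t + j)) =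
      exp (2 * Real.pi * I * α * t) * ∑ j ∈ range k, z ^ j := by
    rw [mul_sum]
    refine sum_congr rfl fun j _ => ?_
    rw [← exp_nat_mul, ← exp_add]
    ring_nf
  have hz : ‖z‖ = 1 := by simp [z, norm_exp]
  have hz_sub_one : 4 * |α - round α| ≤ ‖z - 1‖ := four_mul_abs_sub_round_le_norm_exp_sub_one α
  have hz1 : z ≠ 1 := sub_ne_zero.1 <| norm_pos_iff.1 <| by linarith
  rw [hfactor, norm_mul, show ‖exp (2 * Real.pi * I * α * t)‖ = 1 by simp [norm_exp], one_mul]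
  refine le_min (norm_geom_sum_le_of_norm_eq_one hz k) ?_
  calc _ ≤ 2 / ‖z - 1‖ := norm_geom_sum_le_two_div_of_norm_eq_one hz hz1 k
    _ ≤ 2 / (4 * |α - round α|) := by gcongr
    _ ≤ 1 / |α - round α| := by rw [div_le_div_iff₀ (by positivity) hα]; linarith

lemma norm_sum_range_succ_smul_le {R E : Type*} [SeminormedRing R] [SeminormedAddCommGroup E]
    [Module R E] [IsBoundedSMul R E] (a : ℕ → R) (b : ℕ → E) (n : ℕ) {M : ℝ}
    (hM : ∀ k ≤ n + 1, ‖∑ j ∈ range k, b j‖ ≤ M) :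
    ‖∑ i ∈ range (n + 1), a i • b i‖ ≤ (‖a n‖ + ∑ i ∈ range n, ‖a (i + 1) - a i‖) * M := by
  rw [sum_range_by_parts, Nat.add_sub_cancel, add_mul, sum_mul]
  refine (norm_sub_le _ _).trans (add_le_add ?_ ((norm_sum_le _ _).trans (sum_le_sum ?_)))
  · exact (norm_smul_le _ _).trans (by gcongr; exact hM _ le_rfl)
  · intro i hi
    exact (norm_smul_le _ _).trans (by gcongr; exact hM _ (by rw [mem_range] at hi; omega))

section MonotoneSeq

variable {a : ℕ → ℝ} {n : ℕ}

lemma sum_range_abs_sub_eq_abs_sub (ha : MonotoneOn a (Set.Iic n) ∨ AntitoneOn a (Set.Iic n)) :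
    ∑ i ∈ range n, |a (i + 1) - a i| = |a n - a 0| := by
  have hmem : ∀ i ∈ range n, i ∈ Set.Iic n ∧ i + 1 ∈ Set.Iic n := fun i hi => by
    rw [mem_range] at hi; exact ⟨Set.mem_Iic.2 (by omega), Set.mem_Iic.2 (by omega)⟩
  rw [← sum_range_sub]
  rcases ha with ha | ha
  · have hd : ∀ i ∈ range n, 0 ≤ a (i + 1) - a i := fun i hi =>
      sub_nonneg.2 (ha (hmem i hi).1 (hmem i hi).2 i.le_succ)
    rw [abs_sum_of_nonneg hd]
    exact sum_congr rfl fun i hi => abs_of_nonneg (hd i hi)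
  · have hd : ∀ i ∈ range n, a (i + 1) - a i ≤ 0 := fun i hi =>
      sub_nonpos.2 (ha (hmem i hi).1 (hmem i hi).2 i.le_succ)
    rw [← abs_neg, ← sum_neg_distrib, abs_sum_of_nonneg fun i hi => neg_nonneg.2 (hd i hi)]
    exact sum_congr rfl fun i hi => abs_of_nonpos (hd i hi)

lemma abs_add_sum_range_abs_sub_succ_le
    (ha : MonotoneOn a (Set.Iic (n + 1)) ∨ AntitoneOn a (Set.Iic (n + 1))) :
    |a (n + 1)| + ∑ i ∈ range n, |a (i + 1 + 1) - a (i + 1)| ≤ 2 * |a (n + 1)| + |a 0| := by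
  have htail : ∑ i ∈ range n, |a (i + 1 + 1) - a (i + 1)| ≤ |a (n + 1) - a 0| := by
    rw [← sum_range_abs_sub_eq_abs_sub ha, sum_range_succ' _ n]
    exact le_add_of_nonneg_right (abs_nonneg _)
  linarith [abs_sub (a (n + 1)) (a 0)]

end MonotoneSeq

lemma mapsTo_add_natCast_Iic_Icc (t : ℝ) (n : ℕ) :
    Set.MapsTo (fun i : ℕ => t + i) (Set.Iic n) (Set.Icc t (t + n)) := fun i hi => by
  simp only [Set.mem_Iic] at hi
  exact ⟨by simp, by simpa using hi⟩

lemma Int.sum_Icc_add_one_eq_sum_range {M : Type*} [AddCommMonoid M] (g : ℤ → M) (a : ℤ)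
    (n : ℕ) : ∑ x ∈ Icc (a + 1) (a + n), g x = ∑ i ∈ Finset.range n, g (a + 1 + i) := by
  rw [Int.Icc_eq_finset_map, show (a + n + 1 - (a + 1)).toNat = n by omega, sum_map]
  rfl

theorem exp_sum_weighted_bound :
    ∃ C : ℝ, 0 < C ∧ ∀ (α : ℝ) (Q : ℤ) (P : ℕ) (f : ℝ → ℝ),
      0 < P →
      0 < |α - (round α : ℝ)| →
      ContDiffOn ℝ 1 f (Set.Icc (Q : ℝ) ((Q : ℝ) + P)) →
      (MonotoneOn f (Set.Icc (Q : ℝ) ((Q : ℝ) + P)) ∨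
        AntitoneOn f (Set.Icc (Q : ℝ) ((Q : ℝ) + P))) →
      ‖(∑ x ∈ Finset.Icc (Q + 1) (Q + P),
          Complex.exp (2 * Real.pi * Complex.I * α * x) * (f x : ℂ))‖ ≤
        C * (|f ((Q : ℝ) + P)| + |f (Q : ℝ)|) *
          min (P : ℝ) (1 / |α - (round α : ℝ)|) := by
  refine ⟨2, two_pos, fun α Q P f hP hα _ hf => ?_⟩
  obtain ⟨n, rfl⟩ := Nat.exists_eq_add_one_of_ne_zero hP.ne'
  set a : ℕ → ℝ := fun i => f (Q + i)
  have hshift_mono : Monotone fun i : ℕ => (Q : ℝ) + i := monotone_const.add Nat.mono_cast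
  have ha : MonotoneOn a (Set.Iic (n + 1)) ∨ AntitoneOn a (Set.Iic (n + 1)) :=
    hf.imp (·.comp (hshift_mono.monotoneOn _) (mapsTo_add_natCast_Iic_Icc _ _))
      (·.comp_MonotoneOn (hshift_mono.monotoneOn _) (mapsTo_add_natCast_Iic_Icc _ _))
  have hsum : ∑ x ∈ Icc (Q + 1) (Q + ↑(n + 1)), exp (2 * Real.pi * I * α * x) * (f x : ℂ) =
      ∑ i ∈ range (n + 1), a (i + 1) • exp (2 * Real.pi * I * α * ((Q + 1 : ℝ) + i)) := by
    rw [Int.sum_Icc_add_one_eq_sum_range]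
    refine sum_congr rfl fun i _ => ?_
    simp only [a, real_smul]
    push_cast
    ring_nf
  calc _ = ‖∑ i ∈ range (n + 1), a (i + 1) • exp (2 * Real.pi * I * α * ((Q + 1 : ℝ) + i))‖ := by
        rw [hsum]
    _ ≤ (|a (n + 1)| + ∑ i ∈ range n, |a (i + 1 + 1) - a (i + 1)|) *
          min ((n + 1 : ℕ) : ℝ) (1 / |α - round α|) :=
      norm_sum_range_succ_smul_le (fun i => a (i + 1)) _ n fun k hk =>
        (norm_sum_range_exp_le α _ hα k).trans (min_le_min_right _ (by exact_mod_cast hk))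
    _ ≤ (2 * |a (n + 1)| + |a 0|) * min ((n + 1 : ℕ) : ℝ) (1 / |α - round α|) := by
      gcongr ?_ * _
      exact abs_add_sum_range_abs_sub_succ_le ha
    _ ≤ _ := by
      simp only [a, Nat.cast_zero, add_zero]
      gcongr
      linarith [abs_nonneg (f Q)]
end

section
/- For every natural number p ≥ 1 and real R ≥ 2, |∑_{n ≤ R} n^p · log(R/n) − R^{p+1}/(p+1)²| ≤ C_p · R^p · log R for a constant C_p depending only on p. -/
/-!
Write the sum as `log R * ∑ n ^ p - ∑ n ^ p * log n`. Both summands are monotone, so each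
sum differs from the corresponding integral over `[0, ⌊R⌋]` resp. `[1, ⌊R⌋]` by at most its
last term, which is `O(R ^ p log R)`. The integrals are explicit, and replacing `⌊R⌋` by `R` in
them costs only `O(R ^ p)` because `0 ≤ R - ⌊R⌋ < 1`; what remains is `R ^ (p + 1) / (p + 1) ^ 2`.
-/

open Finset Real

section SumIntegral

variable {f : ℝ → ℝ} {a b : ℕ}

theorem MonotoneOn.integral_le_sum_Ioc (hab : a ≤ b) (hf : MonotoneOn f (Set.Icc a b)) :
    ∫ x in a..b, f x ≤ ∑ i ∈ Ioc a b, f i := by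
  have h := hf.integral_le_sum_Ico hab
  rwa [sum_Ico_add' (fun i : ℕ ↦ f i), Ico_add_one_add_one_eq_Ioc] at h

theorem MonotoneOn.sum_Ioc_le_integral_add (hab : a ≤ b) (hf : MonotoneOn f (Set.Icc a b)) :
    ∑ i ∈ Ioc a b, f i ≤ (∫ x in a..b, f x) + (f b - f a) := by
  have h := hf.sum_le_integral_Ico hab
  have hIoc := add_sum_Ioc_eq_sum_Icc (f := fun i : ℕ ↦ f i) hab
  have hIco := sum_Ico_add_eq_sum_Icc (f := fun i : ℕ ↦ f i) hab
  linarith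

end SumIntegral

theorem pow_succ_sub_pow_succ_le {x y : ℝ} (hx : 0 ≤ x) (hxy : x ≤ y) (n : ℕ) :
    y ^ (n + 1) - x ^ (n + 1) ≤ (n + 1) * y ^ n * (y - x) := by
  induction n with
  | zero => simp
  | succ n ih =>
    have hxn : x ^ (n + 1) ≤ y ^ (n + 1) := pow_le_pow_left₀ hx hxy _
    have hy : 0 ≤ y := hx.trans hxy
    calc y ^ (n + 1 + 1) - x ^ (n + 1 + 1)
        = y * (y ^ (n + 1) - x ^ (n + 1)) + x ^ (n + 1) * (y - x) := by ring
      _ ≤ y * ((n + 1) * y ^ n * (y - x)) + y ^ (n + 1) * (y - x) := by gcongr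
      _ = (↑(n + 1) + 1) * y ^ (n + 1) * (y - x) := by push_cast; ring

theorem integral_one_pow_mul_log (p : ℕ) {b : ℝ} (hb : 0 < b) :
    ∫ x in (1 : ℝ)..b, x ^ p * log x =
      b ^ (p + 1) * log b / (p + 1) - (b ^ (p + 1) - 1) / ((p : ℝ) + 1) ^ 2 := by
  have hzero : (0 : ℝ) ∉ Set.uIcc 1 b := fun h ↦ by
    rcases Set.mem_uIcc.mp h with h | h <;> linarith [h.1, h.2]
  have hderiv : ∀ x ∈ Set.uIcc (1 : ℝ) b, HasDerivAt
      (fun x ↦ x ^ (p + 1) * log x / (p + 1) - x ^ (p + 1) / ((p : ℝ) + 1) ^ 2)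
      (x ^ p * log x) x := by
    intro x hx
    have hx0 : x ≠ 0 := fun h ↦ hzero (h ▸ hx)
    have hpow : HasDerivAt (fun x : ℝ ↦ x ^ (p + 1)) ((p + 1) * x ^ p) x := by
      simpa using hasDerivAt_pow (p + 1) x
    refine (((hpow.mul (hasDerivAt_log hx0)).div_const ((p : ℝ) + 1)).sub
      (hpow.div_const (((p : ℝ) + 1) ^ 2))).congr_deriv ?_
    field_simp
    ring
  have hcont : ContinuousOn (fun x : ℝ ↦ x ^ p * log x) (Set.uIcc 1 b) :=
    (continuous_pow p).continuousOn.mul (continuousOn_log.mono fun x hx h ↦ hzero (h ▸ hx))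
  rw [intervalIntegral.integral_eq_sub_of_hasDerivAt hderiv hcont.intervalIntegrable]
  simp only [one_pow, log_one, mul_zero, zero_div, zero_sub]
  ring

theorem sum_Icc_pow_bounds (p N : ℕ) :
    (N : ℝ) ^ (p + 1) / (p + 1) ≤ ∑ n ∈ Icc 1 N, (n : ℝ) ^ p ∧
      ∑ n ∈ Icc 1 N, (n : ℝ) ^ p ≤ (N : ℝ) ^ (p + 1) / (p + 1) + N ^ p := by
  have hmono : MonotoneOn (fun x : ℝ ↦ x ^ p) (Set.Icc ((0 : ℕ) : ℝ) N) :=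
    fun x hx y _ hxy ↦ pow_le_pow_left₀ (by simpa using hx.1) hxy p
  have hint : ∫ x in ((0 : ℕ) : ℝ)..N, x ^ p = (N : ℝ) ^ (p + 1) / (p + 1) := by
    simp [integral_pow]
  rw [show Icc 1 N = Ioc 0 N from Icc_add_one_left_eq_Ioc 0 N]
  have h1 := hmono.integral_le_sum_Ioc N.zero_le
  have h2 := hmono.sum_Ioc_le_integral_add N.zero_le
  rw [hint] at h1 h2
  simp only [Nat.cast_zero] at h2
  exact ⟨h1, h2.trans (by linarith [pow_nonneg (le_refl (0 : ℝ)) p])⟩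

theorem sum_Icc_pow_mul_log_bounds (p : ℕ) {N : ℕ} (hN : 1 ≤ N) :
    ∫ x in (1 : ℝ)..N, x ^ p * log x ≤ ∑ n ∈ Icc 1 N, (n : ℝ) ^ p * log n ∧
      ∑ n ∈ Icc 1 N, (n : ℝ) ^ p * log n ≤ (∫ x in (1 : ℝ)..N, x ^ p * log x) + N ^ p * log N := by
  have hmono : MonotoneOn (fun x : ℝ ↦ x ^ p * log x) (Set.Icc ((1 : ℕ) : ℝ) N) := by
    intro x hx y _ hxy
    have hx1 : (1 : ℝ) ≤ x := by simpa using hx.1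
    exact mul_le_mul (pow_le_pow_left₀ (by linarith) hxy p) (log_le_log (by linarith) hxy)
      (log_nonneg hx1) (pow_nonneg (by linarith) p)
  have hsplit := add_sum_Ioc_eq_sum_Icc (f := fun n : ℕ ↦ (n : ℝ) ^ p * log n) hN
  simp only [Nat.cast_one, one_pow, log_one, mul_zero, zero_add] at hsplit
  rw [← hsplit]
  have h1 := hmono.integral_le_sum_Ioc hN
  have h2 := hmono.sum_Ioc_le_integral_add hN
  simp only [Nat.cast_one, one_pow, log_one, mul_zero, sub_zero] at h1 h2
  exact ⟨h1, h2⟩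

/-- The first two terms are `log R * ∫ t in 0..x, t ^ p - ∫ t in 1..x, t ^ p * log t`, the
integral approximation of the sum for `x = ⌊R⌋`. -/
theorem abs_integral_approx_sub_le (p : ℕ) {x R : ℝ} (hx : 0 < x) (hxR : x ≤ R) (hRx : R ≤ x + 1) :
    |x ^ (p + 1) * log (R / x) / (p + 1) + (x ^ (p + 1) - 1) / ((p : ℝ) + 1) ^ 2 -
      R ^ (p + 1) / ((p : ℝ) + 1) ^ 2| ≤ R ^ p + 1 := by
  have hq : (1 : ℝ) ≤ p + 1 := by linarith [p.cast_nonneg (α := ℝ)]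
  have hR : 0 ≤ R := hx.le.trans hxR
  have hlog : x ^ (p + 1) * log (R / x) ≤ R ^ p := calc
    x ^ (p + 1) * log (R / x) ≤ x ^ (p + 1) * (R / x - 1) := by
      gcongr; exact log_le_sub_one_of_pos (div_pos (hx.trans_le hxR) hx)
    _ = x ^ p * (R - x) := by field_simp; ring
    _ ≤ R ^ p * 1 :=
      mul_le_mul (pow_le_pow_left₀ hx.le hxR p) (by linarith) (by linarith) (pow_nonneg hR p)
    _ = R ^ p := mul_one _
  have hlog0 : 0 ≤ x ^ (p + 1) * log (R / x) :=
    mul_nonneg (by positivity) (log_nonneg ((one_le_div hx).mpr hxR))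
  have hpow : R ^ (p + 1) - x ^ (p + 1) ≤ (p + 1) * R ^ p := by
    have := pow_succ_sub_pow_succ_le hx.le hxR p
    have : (p + 1) * R ^ p * (R - x) ≤ (p + 1) * R ^ p * 1 := by gcongr; linarith
    linarith
  have hpow0 : x ^ (p + 1) ≤ R ^ (p + 1) := pow_le_pow_left₀ hx.le hxR _
  have hsplit : x ^ (p + 1) * log (R / x) / (p + 1) + (x ^ (p + 1) - 1) / ((p : ℝ) + 1) ^ 2 -
      R ^ (p + 1) / ((p : ℝ) + 1) ^ 2 = x ^ (p + 1) * log (R / x) / (p + 1) -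
      (R ^ (p + 1) - x ^ (p + 1) + 1) / ((p : ℝ) + 1) ^ 2 := by ring
  rw [hsplit, abs_le]
  constructor
  · have h1 : (R ^ (p + 1) - x ^ (p + 1) + 1) / ((p : ℝ) + 1) ^ 2 ≤ R ^ p + 1 := by
      rw [div_le_iff₀ (by positivity)]
      nlinarith [pow_nonneg hR p]
    have h2 : 0 ≤ x ^ (p + 1) * log (R / x) / (p + 1) := div_nonneg hlog0 (by linarith)
    linarith
  · have h1 : x ^ (p + 1) * log (R / x) / (p + 1) ≤ x ^ (p + 1) * log (R / x) :=
      div_le_self hlog0 hq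
    have h2 : 0 ≤ (R ^ (p + 1) - x ^ (p + 1) + 1) / ((p : ℝ) + 1) ^ 2 :=
      div_nonneg (by linarith) (by positivity)
    linarith

theorem abs_sum_pow_mul_log_div_sub_le (p : ℕ) {R : ℝ} (hR : 1 ≤ R) :
    |∑ n ∈ Icc 1 ⌊R⌋₊, (n : ℝ) ^ p * log (R / n) - R ^ (p + 1) / ((p : ℝ) + 1) ^ 2| ≤
      R ^ p * log R + R ^ p + 1 := by
  set N := ⌊R⌋₊
  have hN : 1 ≤ N := Nat.one_le_floor_iff R |>.mpr hR
  have hN0 : (0 : ℝ) < N := by exact_mod_cast hN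
  have hNR : (N : ℝ) ≤ R := Nat.floor_le (by linarith)
  have hRN : R ≤ N + 1 := (Nat.lt_floor_add_one R).le
  have hsum : ∑ n ∈ Icc 1 N, (n : ℝ) ^ p * log (R / n) =
      log R * ∑ n ∈ Icc 1 N, (n : ℝ) ^ p - ∑ n ∈ Icc 1 N, (n : ℝ) ^ p * log n := by
    rw [mul_sum, ← sum_sub_distrib]
    refine sum_congr rfl fun n hn ↦ ?_
    have hn : (0 : ℝ) < n := by exact_mod_cast (mem_Icc.mp hn).1
    rw [log_div (by linarith) hn.ne']
    ring
  obtain ⟨hT1, hT1'⟩ := sum_Icc_pow_bounds p N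
  obtain ⟨hT2, hT2'⟩ := sum_Icc_pow_mul_log_bounds p hN
  rw [integral_one_pow_mul_log p hN0] at hT2 hT2'
  obtain ⟨hmain, hmain'⟩ := abs_le.mp (abs_integral_approx_sub_le p hN0 hNR hRN)
  have hM : (N : ℝ) ^ (p + 1) * log (R / N) / (p + 1) =
      log R * ((N : ℝ) ^ (p + 1) / (p + 1)) - (N : ℝ) ^ (p + 1) * log N / (p + 1) := by
    rw [log_div (by linarith) hN0.ne']
    ring
  have hlogR : 0 ≤ log R := log_nonneg hR
  have hpow : (N : ℝ) ^ p ≤ R ^ p := pow_le_pow_left₀ hN0.le hNR p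
  have hT1R : log R * ∑ n ∈ Icc 1 N, (n : ℝ) ^ p ≤
      log R * ((N : ℝ) ^ (p + 1) / (p + 1) + N ^ p) :=
    mul_le_mul_of_nonneg_left hT1' hlogR
  have hT1R' : log R * ((N : ℝ) ^ (p + 1) / (p + 1)) ≤ log R * ∑ n ∈ Icc 1 N, (n : ℝ) ^ p :=
    mul_le_mul_of_nonneg_left hT1 hlogR
  have hpowR : (N : ℝ) ^ p * log R ≤ R ^ p * log R := mul_le_mul_of_nonneg_right hpow hlogR
  have hlogN : (N : ℝ) ^ p * log N ≤ R ^ p * log R :=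
    mul_le_mul hpow (log_le_log hN0 hNR) (log_nonneg (by exact_mod_cast hN)) (by positivity)
  rw [hsum, abs_le]
  constructor <;> linarith

theorem sum_pow_log_asymp_general (p : ℕ) :
    ∃ C : ℝ, 0 < C ∧ ∀ R : ℝ, 2 ≤ R →
      |(∑ n ∈ Finset.Icc 1 ⌊R⌋₊, (n : ℝ) ^ p * Real.log (R / n)) -
          R ^ (p + 1) / ((p : ℝ) + 1) ^ 2| ≤
        C * R ^ p * Real.log R := by
  refine ⟨5, by norm_num, fun R hR ↦ ?_⟩
  have hlog : 1 / 2 ≤ log R := by linarith [log_two_gt_d9, log_le_log two_pos hR]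
  have hpow : 1 ≤ R ^ p := one_le_pow₀ (by linarith)
  have hpow_le : R ^ p / 2 ≤ R ^ p * log R := by nlinarith
  linarith [abs_sum_pow_mul_log_div_sub_le p (by linarith : 1 ≤ R)]

theorem sum_pow_log_asymp (p : ℕ) (hp : 1 ≤ p) :
    ∃ C : ℝ, 0 < C ∧ ∀ R : ℝ, 2 ≤ R →
      |(∑ n ∈ Finset.Icc 1 ⌊R⌋₊, (n : ℝ) ^ p * Real.log (R / n)) -
          R ^ (p + 1) / ((p : ℝ) + 1) ^ 2| ≤
        C * R ^ p * Real.log R :=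
  sum_pow_log_asymp_general p
end

section
/- There is an absolute constant C such that for all real R ≥ 2, |∑_{n ≤ R} n²·log(1 + (R/n)·(R−n)/(R+n)) − (5/6 − (log 2)/3 − π/6)·R³| ≤ C·R²·log R, the sum over positive integers n ≤ R. -/
/-!
Write the `n`-th term as `f n` with `f t = t² (log (R² + t²) - log t - log (R + t))`.
Although `f` is not monotone, it is a signed sum of the three nonnegative increasing functions
`t² log (R² + t²)`, `t² log t`, `t² log (R + t)`, so comparing each with its integral shows that
the sum over `n ≤ ⌊R⌋` differs from `∫₁^⌊R⌋ f` by `O(R² log R)`; so does the tail `∫_⌊R⌋^R f`.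
Finally `f` has an elementary antiderivative `F`, and
`F R - F 1 = (5/6 - log 2 / 3 - π/6) R³ + O(R²)`, the arctangent term producing the `π`.
-/

open Real Finset

theorem MonotoneOn.sum_Icc_sub_integral_mem {f : ℝ → ℝ} {a b : ℕ} (hab : a ≤ b)
    (hf : MonotoneOn f (Set.Icc a b)) (ha : 0 ≤ f a) :
    ∑ n ∈ Icc a b, f n - ∫ x in a..b, f x ∈ Set.Icc 0 (f b) := by
  have lower := hf.integral_le_sum_Ico hab
  rw [sum_Ico_add' (fun n : ℕ => f n), Ico_add_one_add_one_eq_Ioc] at lower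
  have upper := hf.sum_le_integral_Ico hab
  have split_bot := sum_Ioc_add_eq_sum_Icc (f := fun n : ℕ => f n) hab
  have split_top := sum_Ico_add_eq_sum_Icc (f := fun n : ℕ => f n) hab
  constructor <;> linarith

theorem monotoneOn_sq_mul_log {φ : ℝ → ℝ} (hφ : MonotoneOn φ (Set.Ici 1)) (h1 : 1 ≤ φ 1) :
    MonotoneOn (fun t => t ^ 2 * log (φ t)) (Set.Ici 1) := by
  intro x (hx : 1 ≤ x) y hy hxy
  have hφx : 1 ≤ φ x := h1.trans (hφ Set.self_mem_Ici hx hx)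
  exact mul_le_mul (by gcongr) (log_le_log (by linarith) (hφ hx hy hxy))
    (log_nonneg hφx) (by positivity)

theorem sum_Icc_sq_mul_log_sub_integral_mem {φ : ℝ → ℝ} (hφ : MonotoneOn φ (Set.Ici 1))
    (h1 : 1 ≤ φ 1) {N : ℕ} (hN : 1 ≤ N) :
    ∑ n ∈ Icc 1 N, (n : ℝ) ^ 2 * log (φ n) - ∫ t in (1 : ℝ)..N, t ^ 2 * log (φ t) ∈
      Set.Icc 0 ((N : ℝ) ^ 2 * log (φ N)) := by
  have hmono : MonotoneOn (fun t => t ^ 2 * log (φ t)) (Set.Icc ((1 : ℕ) : ℝ) N) :=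
    (monotoneOn_sq_mul_log hφ h1).mono (by simpa using Set.Icc_subset_Ici_self)
  simpa using hmono.sum_Icc_sub_integral_mem hN (by simpa using log_nonneg h1)

theorem log_le_three_mul_log {R y : ℝ} (hR : 2 ≤ R) (hy : 0 < y) (hyR : y ≤ 2 * R ^ 2) :
    log y ≤ 3 * log R :=
  calc log y ≤ log (2 * R ^ 2) := log_le_log hy hyR
    _ = log 2 + 2 * log R := by rw [log_mul two_ne_zero (by positivity), log_pow]; norm_num
    _ ≤ 3 * log R := by linarith [log_le_log two_pos hR]

theorem sq_mul_log_le_three_mul_sq_mul_log {R t y : ℝ} (hR : 2 ≤ R) (ht : 0 ≤ t) (htR : t ≤ R)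
    (hy : 1 ≤ y) (hyR : y ≤ 2 * R ^ 2) : t ^ 2 * log y ≤ 3 * R ^ 2 * log R :=
  calc t ^ 2 * log y ≤ R ^ 2 * (3 * log R) := by
        gcongr
        exacts [log_nonneg hy, log_le_three_mul_log hR (by linarith) hyR]
    _ = 3 * R ^ 2 * log R := by ring

noncomputable def summand (R t : ℝ) : ℝ :=
  t ^ 2 * (log (R ^ 2 + t ^ 2) - log t - log (R + t))

-- integrate each of the three terms of `summand` by parts
noncomputable def summandPrimitive (R t : ℝ) : ℝ :=
  t ^ 3 / 3 * log (R ^ 2 + t ^ 2) - 2 / 9 * t ^ 3 + 2 / 3 * R ^ 2 * t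
    - 2 / 3 * R ^ 3 * arctan (t / R)
    - (t ^ 3 / 3 * log t - t ^ 3 / 9)
    - (t ^ 3 / 3 * log (R + t) - t ^ 3 / 9 + R / 6 * t ^ 2 - R ^ 2 / 3 * t
        + R ^ 3 / 3 * log (R + t))

theorem sq_mul_log_one_add_eq_summand {R t : ℝ} (ht : 0 < t) (hRt : 0 < R + t) :
    t ^ 2 * log (1 + R / t * ((R - t) / (R + t))) = summand R t := by
  have harg : 1 + R / t * ((R - t) / (R + t)) = (R ^ 2 + t ^ 2) / (t * (R + t)) := by
    field_simp
    ring
  rw [harg, log_div (by positivity) (by positivity), log_mul ht.ne' hRt.ne', summand]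
  ring

theorem hasDerivAt_summandPrimitive {R t : ℝ} (hR : R ≠ 0) (ht : t ≠ 0) (hRt : R + t ≠ 0) :
    HasDerivAt (summandPrimitive R) (summand R t) t := by
  have hcube : HasDerivAt (fun x : ℝ => x ^ 3) (3 * t ^ 2) t := by
    simpa using hasDerivAt_pow 3 t
  have hcube3 : HasDerivAt (fun x : ℝ => x ^ 3 / 3) (t ^ 2) t := by
    simpa [mul_div_cancel_left₀] using hcube.div_const 3
  have hlog1 :
      HasDerivAt (fun x : ℝ => log (R ^ 2 + x ^ 2)) (2 * t / (R ^ 2 + t ^ 2)) t := by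
    simpa using ((hasDerivAt_pow 2 t).const_add (R ^ 2)).log (by positivity)
  have hlog2 : HasDerivAt log t⁻¹ t := hasDerivAt_log ht
  have hlog3 : HasDerivAt (fun x : ℝ => log (R + x)) (R + t)⁻¹ t := by
    simpa [one_div] using ((hasDerivAt_id t).const_add R).log hRt
  have harctan :
      HasDerivAt (fun x : ℝ => arctan (x / R)) (1 / (1 + (t / R) ^ 2) * (1 / R)) t := by
    simpa using ((hasDerivAt_id t).div_const R).arctan
  have h₁ := (((hcube3.mul hlog1).sub (hcube.const_mul (2 / 9))).add
    ((hasDerivAt_id t).const_mul (2 / 3 * R ^ 2))).sub (harctan.const_mul (2 / 3 * R ^ 3))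
  have h₂ := (hcube3.mul hlog2).sub (hcube.div_const 9)
  have h₃ := ((((hcube3.mul hlog3).sub (hcube.div_const 9)).add
    ((hasDerivAt_pow 2 t).const_mul (R / 6))).sub ((hasDerivAt_id t).const_mul (R ^ 2 / 3))).add
    (hlog3.const_mul (R ^ 3 / 3))
  refine ((h₁.sub h₂).sub h₃).congr_deriv ?_
  have : R ^ 2 + t ^ 2 ≠ 0 := by positivity
  field_simp
  rw [summand]
  ring

theorem integral_summand {R a b : ℝ} (hR : 0 < R) (ha : 0 < a) (hab : a ≤ b) :
    ∫ t in a..b, summand R t = summandPrimitive R b - summandPrimitive R a := by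
  have hpos : ∀ t ∈ Set.uIcc a b, 0 < t := fun t ht ↦ ha.trans_le (Set.uIcc_of_le hab ▸ ht).1
  have hcont : ContinuousOn (summand R) (Set.uIcc a b) := by
    unfold summand
    fun_prop (disch := intro t ht; have := hpos t ht; positivity)
  exact intervalIntegral.integral_eq_sub_of_hasDerivAt
    (fun t ht ↦ hasDerivAt_summandPrimitive hR.ne' (hpos t ht).ne' (by linarith [hpos t ht]))
    hcont.intervalIntegrable

theorem abs_summand_le {R t : ℝ} (hR : 2 ≤ R) (ht : 1 ≤ t) (htR : t ≤ R) :
    |summand R t| ≤ 3 * R ^ 2 * log R := by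
  have hlog_mul : log t + log (R + t) = log (t * (R + t)) :=
    (log_mul (by positivity) (by positivity)).symm
  have hlower : log (t * (R + t)) ≤ log (R ^ 2 + t ^ 2) :=
    log_le_log (by positivity) (by nlinarith)
  have hlog_t := log_nonneg ht
  have hlog_Rt := log_nonneg (show 1 ≤ R + t by linarith)
  have hupper := sq_mul_log_le_three_mul_sq_mul_log hR (by linarith) htR
    (show 1 ≤ R ^ 2 + t ^ 2 by nlinarith) (by nlinarith)
  rw [abs_le, summand]
  constructor <;> nlinarith [sq_nonneg t]

theorem abs_sum_summand_sub_integral_le {R : ℝ} (hR : 2 ≤ R) {N : ℕ} (hN : 1 ≤ N)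
    (hNR : (N : ℝ) ≤ R) :
    |∑ n ∈ Icc 1 N, summand R n - ∫ t in (1 : ℝ)..N, summand R t| ≤ 9 * R ^ 2 * log R := by
  have hN1 : (1 : ℝ) ≤ N := by exact_mod_cast hN
  have hφ₁ : MonotoneOn (fun t : ℝ => R ^ 2 + t ^ 2) (Set.Ici 1) := fun x (hx : 1 ≤ x) y _ hxy ↦ by
    dsimp only; gcongr
  have hφ₂ : MonotoneOn (fun t : ℝ => t) (Set.Ici 1) := monotoneOn_id
  have hφ₃ : MonotoneOn (fun t : ℝ => R + t) (Set.Ici 1) := fun x _ y _ hxy ↦ by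
    dsimp only; linarith
  have integrable {φ : ℝ → ℝ} (hφ : MonotoneOn φ (Set.Ici 1)) (h1 : 1 ≤ φ 1) :
      IntervalIntegrable (fun t => t ^ 2 * log (φ t)) MeasureTheory.volume 1 N :=
    ((monotoneOn_sq_mul_log hφ h1).mono
      (by rw [Set.uIcc_of_le hN1]; exact Set.Icc_subset_Ici_self)).intervalIntegrable
  have hsum : ∑ n ∈ Icc 1 N, summand R n = ∑ n ∈ Icc 1 N, (n : ℝ) ^ 2 * log (R ^ 2 + n ^ 2)
      - ∑ n ∈ Icc 1 N, (n : ℝ) ^ 2 * log n - ∑ n ∈ Icc 1 N, (n : ℝ) ^ 2 * log (R + n) := by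
    simp only [← sum_sub_distrib, summand, mul_sub]
  have hint : ∫ t in (1 : ℝ)..N, summand R t = (∫ t in (1 : ℝ)..N, t ^ 2 * log (R ^ 2 + t ^ 2))
      - (∫ t in (1 : ℝ)..N, t ^ 2 * log t) - ∫ t in (1 : ℝ)..N, t ^ 2 * log (R + t) := by
    have h₁ := integrable hφ₁ (by nlinarith)
    have h₂ := integrable hφ₂ le_rfl
    have h₃ := integrable hφ₃ (by linarith)
    rw [← intervalIntegral.integral_sub h₁ h₂, ← intervalIntegral.integral_sub (h₁.sub h₂) h₃]
    simp only [summand, mul_sub]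
  obtain ⟨l₁, u₁⟩ := sum_Icc_sq_mul_log_sub_integral_mem hφ₁ (by nlinarith) hN
  obtain ⟨l₂, u₂⟩ := sum_Icc_sq_mul_log_sub_integral_mem hφ₂ le_rfl hN
  obtain ⟨l₃, u₃⟩ := sum_Icc_sq_mul_log_sub_integral_mem hφ₃ (by linarith) hN
  have b₁ := sq_mul_log_le_three_mul_sq_mul_log hR (by linarith) hNR
    (show 1 ≤ R ^ 2 + (N : ℝ) ^ 2 by nlinarith) (by nlinarith)
  have b₂ := sq_mul_log_le_three_mul_sq_mul_log hR (by linarith) hNR hN1 (by nlinarith)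
  have b₃ := sq_mul_log_le_three_mul_sq_mul_log hR (by linarith) hNR
    (show 1 ≤ R + N by linarith) (by nlinarith)
  rw [hsum, hint, abs_le]
  constructor <;> linarith

theorem abs_summandPrimitive_sub_le {R a : ℝ} (hR : 2 ≤ R) (ha : 1 ≤ a) (haR : a ≤ R)
    (hRa : R ≤ a + 1) :
    |summandPrimitive R R - summandPrimitive R a| ≤ 3 * R ^ 2 * log R := by
  have hlogR : 0 ≤ log R := log_nonneg (by linarith)
  have hbound : ∀ t ∈ Set.uIoc a R, ‖summand R t‖ ≤ 3 * R ^ 2 * log R := fun t ht ↦ by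
    rw [Set.uIoc_of_le haR] at ht
    exact abs_summand_le hR (by linarith [ht.1]) ht.2
  rw [← integral_summand (by linarith) (by linarith) haR]
  calc |∫ t in a..R, summand R t| ≤ 3 * R ^ 2 * log R * |R - a| :=
        intervalIntegral.norm_integral_le_of_norm_le_const hbound
    _ ≤ 3 * R ^ 2 * log R * 1 := by
        gcongr
        rw [abs_le]
        constructor <;> linarith
    _ = 3 * R ^ 2 * log R := mul_one _

theorem arctan_le_self {x : ℝ} (hx : 0 ≤ x) : arctan x ≤ x := by
  simpa only [tan_arctan] using le_tan (arctan_nonneg.2 hx) (arctan_lt_pi_div_two x)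

theorem log_add_one_sub_log_le {x : ℝ} (hx : 0 < x) : log (x + 1) - log x ≤ x⁻¹ := by
  have h := log_le_sub_one_of_pos (show 0 < (x + 1) / x by positivity)
  rwa [log_div (by positivity) hx.ne', add_div, div_self hx.ne', one_div, add_sub_cancel_left] at h

theorem summandPrimitive_self_sub_one {R : ℝ} (hR : 0 < R) :
    summandPrimitive R R - summandPrimitive R 1 - (5 / 6 - log 2 / 3 - π / 6) * R ^ 3
      = R ^ 3 * (log (R + 1) - log R) / 3 + (log (R + 1) - log (R ^ 2 + 1)) / 3
        + 2 / 3 * (R ^ 3 * arctan R⁻¹ - R ^ 2) + R / 6 - R ^ 2 / 3 := by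
  rw [summandPrimitive, summandPrimitive, div_self hR.ne', arctan_one, one_div,
    show R ^ 2 + R ^ 2 = 2 * R ^ 2 by ring, show R + R = 2 * R by ring,
    log_mul two_ne_zero (by positivity), log_mul two_ne_zero hR.ne', log_pow]
  simp only [one_pow, log_one]
  push_cast
  ring

theorem abs_summandPrimitive_self_sub_one_sub_le {R : ℝ} (hR : 2 ≤ R) :
    |summandPrimitive R R - summandPrimitive R 1 - (5 / 6 - log 2 / 3 - π / 6) * R ^ 3|
      ≤ 10 * R ^ 2 * log R := by
  have hR0 : 0 < R := by linarith
  have hlogR : 1 / 2 ≤ log R := by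
    linarith [log_two_gt_d9, log_le_log two_pos hR]
  have hlog_succ := log_add_one_sub_log_le hR0
  have hlog_mono := log_le_log hR0 (show R ≤ R + 1 by linarith)
  have hlog_sq := log_le_log (by positivity) (show R + 1 ≤ R ^ 2 + 1 by nlinarith)
  have hlog_sq_le :=
    log_le_three_mul_log hR (by positivity) (show R ^ 2 + 1 ≤ 2 * R ^ 2 by nlinarith)
  have harctan := arctan_le_self (inv_nonneg.2 hR0.le)
  have harctan0 := arctan_nonneg.2 (inv_nonneg.2 hR0.le)
  have hu : R ^ 3 * (log (R + 1) - log R) ≤ R ^ 2 := by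
    calc _ ≤ R ^ 3 * R⁻¹ := by gcongr
      _ = R ^ 2 := by field_simp
  have hw : R ^ 3 * arctan R⁻¹ ≤ R ^ 2 := by
    calc _ ≤ R ^ 3 * R⁻¹ := by gcongr
      _ = R ^ 2 := by field_simp
  have hu0 : 0 ≤ R ^ 3 * (log (R + 1) - log R) := mul_nonneg (by positivity) (by linarith)
  have hw0 : 0 ≤ R ^ 3 * arctan R⁻¹ := mul_nonneg (by positivity) harctan0
  have hR_sq : R ^ 2 ≤ 2 * R ^ 2 * log R := by nlinarith [sq_nonneg R]
  have hlogR_le : log R ≤ R ^ 2 * log R := le_mul_of_one_le_left (by linarith) (by nlinarith)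
  have hR_le : R ≤ R ^ 2 := by nlinarith
  rw [summandPrimitive_self_sub_one hR0, abs_le]
  constructor <;> linarith

theorem sum_f_asymp :
    ∃ C : ℝ, 0 < C ∧ ∀ R : ℝ, 2 ≤ R →
      |(∑ n ∈ Finset.Icc 1 ⌊R⌋₊,
            (n : ℝ) ^ 2 * Real.log (1 + (R / n) * ((R - n) / (R + n)))) -
          (5 / 6 - Real.log 2 / 3 - Real.pi / 6) * R ^ 3| ≤
        C * R ^ 2 * Real.log R := by
  refine ⟨22, by norm_num, fun R hR ↦ ?_⟩
  set N := ⌊R⌋₊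
  have hN : 1 ≤ N := Nat.le_floor (by norm_num; linarith)
  have hN1 : (1 : ℝ) ≤ N := by exact_mod_cast hN
  have hNR : (N : ℝ) ≤ R := Nat.floor_le (by linarith)
  have hRN : R ≤ N + 1 := (Nat.lt_floor_add_one R).le
  have hsum : ∑ n ∈ Icc 1 N, (n : ℝ) ^ 2 * log (1 + R / n * ((R - n) / (R + n)))
      = ∑ n ∈ Icc 1 N, summand R n := sum_congr rfl fun n hn ↦ by
    have hn : (1 : ℝ) ≤ n := by exact_mod_cast (mem_Icc.1 hn).1
    exact sq_mul_log_one_add_eq_summand (by linarith) (by linarith)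
  have h₁ := abs_sum_summand_sub_integral_le hR hN hNR
  have h₂ := abs_summandPrimitive_sub_le hR hN1 hNR hRN
  have h₃ := abs_summandPrimitive_self_sub_one_sub_le hR
  rw [integral_summand (by linarith) one_pos hN1] at h₁
  rw [hsum]
  rw [abs_le] at h₁ h₂ h₃ ⊢
  constructor <;> linarith
end

section
/- There is an absolute constant C such that for all real R ≥ 1, |∑_{n ≤ R} (1/n²)·log(1 + n²/R²) − (π/2 − log 2)/R| ≤ C/R², the sum over positive integers n ≤ R. -/
/-!
Write `g t = log (1 + t²) / t²`, so that the `n`-th summand is `g (n / R) / R²`. Since `g t` is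
the slope of the concave function `log` between `1` and `1 + t²`, `g` is antitone on `(0, ∞)`;
it also takes values in `[0, 1]`. Hence the sum of `x ↦ g (x / R)` over `1, …, ⌊R⌋` differs
by at most `2` from its integral over `[0, R]`, which is `R ∫₀¹ g = R (π / 2 - log 2)`, an
antiderivative of `g` being `2 arctan t - log (1 + t²) / t`.
-/

open Real MeasureTheory Set

theorem intervalIntegral.integral_le_mul_sub_of_nonneg_of_le {f : ℝ → ℝ} {a b c : ℝ}
    (hab : a ≤ b) (hf0 : ∀ x, 0 ≤ f x) (hfc : ∀ x, f x ≤ c) :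
    ∫ x in a..b, f x ≤ c * (b - a) := calc
  ∫ x in a..b, f x ≤ ‖∫ x in a..b, f x‖ := le_abs_self _
  _ ≤ c * |b - a| := norm_integral_le_of_norm_le_const fun x _ => by
    rw [Real.norm_eq_abs, abs_of_nonneg (hf0 x)]; exact hfc x
  _ = c * (b - a) := by rw [abs_of_nonneg (sub_nonneg.mpr hab)]

namespace AntitoneOn

variable {f : ℝ → ℝ} {N : ℕ}

theorem sum_Icc_le_integral_add (hN : 1 ≤ N) (hf : AntitoneOn f (Icc 1 N)) :
    ∑ n ∈ Finset.Icc 1 N, f n ≤ f 1 + ∫ x in (1 : ℝ)..N, f x := by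
  have hshift := sum_le_integral_Ico hN (by rwa [Nat.cast_one])
  rw [Finset.sum_Ico_add' (fun n : ℕ => f n)] at hshift
  rw [← Finset.Ico_add_one_right_eq_Icc, Finset.sum_eq_sum_Ico_succ_bot (by omega)]
  simpa using hshift

theorem integral_le_sum_Icc (hN : 1 ≤ N) (hf : AntitoneOn f (Icc 1 N)) (hfN : 0 ≤ f N) :
    ∫ x in (1 : ℝ)..N, f x ≤ ∑ n ∈ Finset.Icc 1 N, f n := by
  have hIco := integral_le_sum_Ico hN (by rwa [Nat.cast_one] : AntitoneOn f _)
  rw [Nat.cast_one] at hIco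
  rw [← Finset.Ico_add_one_right_eq_Icc, Finset.sum_Ico_succ_top hN]
  linarith

theorem abs_sum_Icc_sub_integral_le {c R : ℝ} (hf : AntitoneOn f (Ioi 0))
    (hf0 : ∀ x, 0 ≤ f x) (hfc : ∀ x, f x ≤ c) (hfi : IntervalIntegrable f volume 0 R)
    (hN : 1 ≤ N) (hNR : N ≤ R) (hRN : R ≤ N + 1) :
    |∑ n ∈ Finset.Icc 1 N, f n - ∫ x in (0 : ℝ)..R, f x| ≤ 2 * c := by
  have hN1 : (1 : ℝ) ≤ N := by exact_mod_cast hN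
  have hmono : AntitoneOn f (Icc 1 N) := hf.mono fun x hx => lt_of_lt_of_le one_pos hx.1
  have hsub : ∀ a b, 0 ≤ a → a ≤ b → b ≤ R → IntervalIntegrable f volume a b :=
    fun a b ha hab hb => hfi.mono_set <| by
      rw [uIcc_of_le hab, uIcc_of_le (by linarith)]; exact Icc_subset_Icc ha hb
  have hsplit : ∫ x in (0 : ℝ)..R, f x =
      (∫ x in (0 : ℝ)..1, f x) + (∫ x in (1 : ℝ)..N, f x) + ∫ x in (N : ℝ)..R, f x := by
    rw [intervalIntegral.integral_add_adjacent_intervals (hsub 0 1 le_rfl zero_le_one (by linarith))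
        (hsub 1 N zero_le_one hN1 hNR),
      intervalIntegral.integral_add_adjacent_intervals (hsub 0 N le_rfl (by linarith) hNR)
        (hsub N R (by linarith) hNR le_rfl)]
  have hc : 0 ≤ c := (hf0 0).trans (hfc 0)
  have hhead0 : 0 ≤ ∫ x in (0 : ℝ)..1, f x :=
    intervalIntegral.integral_nonneg zero_le_one fun x _ => hf0 x
  have hheadc := intervalIntegral.integral_le_mul_sub_of_nonneg_of_le zero_le_one hf0 hfc
  have htail0 : 0 ≤ ∫ x in (N : ℝ)..R, f x :=
    intervalIntegral.integral_nonneg hNR fun x _ => hf0 x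
  have htailc := intervalIntegral.integral_le_mul_sub_of_nonneg_of_le hNR hf0 hfc
  have htailc' : c * (R - N) ≤ c := mul_le_of_le_one_right hc (by linarith)
  have hupper := hmono.sum_Icc_le_integral_add hN
  have hlower := hmono.integral_le_sum_Icc hN (hf0 N)
  rw [abs_le]
  constructor <;> linarith [hfc 1]

end AntitoneOn

noncomputable def logOneAddSqDivSq (t : ℝ) : ℝ := log (1 + t ^ 2) / t ^ 2

local notation "g" => logOneAddSqDivSq

theorem logOneAddSqDivSq_nonneg (t : ℝ) : 0 ≤ g t :=
  div_nonneg (log_nonneg (le_add_of_nonneg_right (sq_nonneg t))) (sq_nonneg t)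

theorem logOneAddSqDivSq_le_one (t : ℝ) : g t ≤ 1 := by
  have hlog : log (1 + t ^ 2) ≤ t ^ 2 := by
    linarith [log_le_sub_one_of_pos (by positivity : 0 < 1 + t ^ 2)]
  exact div_le_one_of_le₀ hlog (sq_nonneg t)

theorem measurable_logOneAddSqDivSq : Measurable g := by
  unfold logOneAddSqDivSq; fun_prop

theorem antitoneOn_logOneAddSqDivSq : AntitoneOn g (Ioi 0) := by
  intro a ha b hb hab
  have hsecant := strictConcaveOn_log_Ioi.concaveOn.neg.secant_mono (a := 1)
    (x := 1 + a ^ 2) (y := 1 + b ^ 2) (mem_Ioi.mpr one_pos) (mem_Ioi.mpr (by positivity))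
    (mem_Ioi.mpr (by positivity)) (by simpa using ha.out.ne') (by simpa using hb.out.ne')
    (by gcongr; exact ha.out.le)
  simp only [Pi.neg_apply, log_one, neg_zero, sub_zero, add_sub_cancel_left, neg_div] at hsecant
  exact neg_le_neg_iff.mp hsecant

theorem intervalIntegrable_logOneAddSqDivSq_comp_div (R a b : ℝ) :
    IntervalIntegrable (fun x => g (x / R)) volume a b :=
  (intervalIntegrable_const (c := (1 : ℝ))).mono_fun'
    (measurable_logOneAddSqDivSq.comp (measurable_id.div_const R)).aestronglyMeasurable
    (ae_of_all _ fun x => by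
      dsimp only
      rw [norm_of_nonneg (logOneAddSqDivSq_nonneg _)]; exact logOneAddSqDivSq_le_one _)

theorem hasDerivAt_two_mul_arctan_sub_log_one_add_sq_div {t : ℝ} (ht : t ≠ 0) :
    HasDerivAt (fun x => 2 * arctan x - log (1 + x ^ 2) / x) (g t) t := by
  have hpos : 1 + t ^ 2 ≠ 0 := by positivity
  have hlog : HasDerivAt (fun x => log (1 + x ^ 2)) (2 * t / (1 + t ^ 2)) t := by
    simpa using ((hasDerivAt_pow 2 t).const_add 1).log hpos
  refine (((hasDerivAt_arctan t).const_mul 2).sub (hlog.div (hasDerivAt_id t) ht)).congr_deriv ?_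
  simp only [id, logOneAddSqDivSq]
  field_simp
  ring

-- `log (1 + x ^ 2) / x` is the difference quotient at `0` of a function with derivative `0` there.
theorem continuousAt_log_one_add_sq_div_zero : ContinuousAt (fun x => log (1 + x ^ 2) / x) 0 := by
  have hderiv : HasDerivAt (fun x => log (1 + x ^ 2)) 0 0 := by
    simpa using ((hasDerivAt_pow 2 (0 : ℝ)).const_add 1).log (by norm_num)
  rw [continuousAt_iff_punctured_nhds, div_zero]
  refine (hasDerivAt_iff_tendsto_slope.mp hderiv).congr fun x => ?_
  simp [slope_def_field]

theorem integral_logOneAddSqDivSq : ∫ t in (0 : ℝ)..1, g t = π / 2 - log 2 := by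
  rw [intervalIntegral.integral_eq_sub_of_hasDeriv_right_of_le zero_le_one
    (f := fun x => 2 * arctan x - log (1 + x ^ 2) / x) ?_
    (fun t ht => (hasDerivAt_two_mul_arctan_sub_log_one_add_sq_div ht.1.ne').hasDerivWithinAt)
    (by simpa using intervalIntegrable_logOneAddSqDivSq_comp_div 1 0 1)]
  · norm_num [arctan_one]; ring
  · intro t _
    rcases eq_or_ne t 0 with rfl | ht
    · exact ((continuous_arctan.continuousAt.const_mul 2).sub
        continuousAt_log_one_add_sq_div_zero).continuousWithinAt
    · exact (hasDerivAt_two_mul_arctan_sub_log_one_add_sq_div ht).continuousAt.continuousWithinAt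

theorem antitoneOn_logOneAddSqDivSq_comp_div {R : ℝ} (hR : 0 < R) :
    AntitoneOn (fun x => g (x / R)) (Ioi 0) := fun _ ha _ hb hab =>
  antitoneOn_logOneAddSqDivSq (div_pos ha hR) (div_pos hb hR) (by gcongr)

theorem integral_logOneAddSqDivSq_comp_div {R : ℝ} (hR : R ≠ 0) :
    ∫ x in (0 : ℝ)..R, g (x / R) = R * (π / 2 - log 2) := by
  rw [intervalIntegral.integral_comp_div _ hR, zero_div, div_self hR,
    integral_logOneAddSqDivSq, smul_eq_mul]

theorem one_div_sq_mul_log_eq {n R : ℝ} (hn : n ≠ 0) (hR : R ≠ 0) :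
    1 / n ^ 2 * log (1 + n ^ 2 / R ^ 2) = g (n / R) / R ^ 2 := by
  rw [logOneAddSqDivSq, div_pow]
  field_simp

theorem sum_o_asymp :
    ∃ C : ℝ, 0 < C ∧ ∀ R : ℝ, 1 ≤ R →
      |(∑ n ∈ Finset.Icc 1 ⌊R⌋₊, (1 / (n : ℝ) ^ 2) * Real.log (1 + n ^ 2 / R ^ 2)) -
          (Real.pi / 2 - Real.log 2) / R| ≤ C / R ^ 2 := by
  refine ⟨2, two_pos, fun R hR => ?_⟩
  have hR0 : 0 < R := by linarith
  have hcmp := (antitoneOn_logOneAddSqDivSq_comp_div hR0).abs_sum_Icc_sub_integral_le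
    (fun _ => logOneAddSqDivSq_nonneg _) (fun _ => logOneAddSqDivSq_le_one _)
    (intervalIntegrable_logOneAddSqDivSq_comp_div R 0 R) (Nat.le_floor (by exact_mod_cast hR))
    (Nat.floor_le hR0.le) (Nat.lt_floor_add_one R).le
  rw [integral_logOneAddSqDivSq_comp_div hR0.ne', mul_one] at hcmp
  have hsum : ∑ n ∈ Finset.Icc 1 ⌊R⌋₊, 1 / (n : ℝ) ^ 2 * log (1 + n ^ 2 / R ^ 2) =
      (∑ n ∈ Finset.Icc 1 ⌊R⌋₊, g (n / R)) / R ^ 2 := by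
    rw [Finset.sum_div]
    refine Finset.sum_congr rfl fun n hn => one_div_sq_mul_log_eq ?_ hR0.ne'
    exact Nat.cast_ne_zero.mpr (Nat.one_le_iff_ne_zero.mp (Finset.mem_Icc.mp hn).1)
  have hdiff : ∀ S : ℝ, S / R ^ 2 - (π / 2 - log 2) / R = (S - R * (π / 2 - log 2)) / R ^ 2 :=
    fun S => by field_simp
  rw [hsum, hdiff, abs_div, abs_of_pos (pow_pos hR0 2)]
  gcongr
end

section
/- Let δ be a positive integer and R ≥ 2 a real. Then ∑_{a ≤ R, δ ∣ a} σ₋₁(a)·a^{3/2} = (π²/15)·(R^{5/2}/δ)·∑_{τ ∣ δ} φ(τ)/τ² + O_ε(R^{3/2+ε} δ^{ε}) for every ε > 0; i.e., for each ε > 0 there is C_ε such that |∑_{a ≤ R, δ ∣ a} σ₋₁(a) a^{3/2} − (π²/15)(R^{5/2}/δ)∑_{τ∣δ} φ(τ)/τ²| ≤ C_ε R^{3/2+ε} δ^{ε}. -/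
/-!
Expanding σ₋₁(a) = ∑_{d ∣ a} 1/d and exchanging the sums, the `a ≤ R` divisible by both `d` and `δ`
are the multiples of `lcm(d, δ)`, and `∑_{k ≤ X} k^s = X^{s+1}/(s+1) + O(X^s)` by the mean value
theorem. So the `d`-th term is `R^{s+1}/((s+1) d lcm(d, δ)) + O(R^s/d)`, and the errors add up to
`O(R^s log R)`. Since `1/(d lcm(d, δ)) = gcd(d, δ)/(d² δ)` and `gcd(d, δ) = ∑_{τ ∣ gcd(d, δ)} φ(τ)`,
the main terms sum to `ζ(2) ∑_{τ ∣ δ} φ(τ)/τ²` up to a tail beyond `⌊R⌋` of size `O(δ/R)`, which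
costs another `O(R^s)`. Finally `log R = O_ε(R^ε)`.
-/

open Finset Real

lemma hasDerivAt_rpow_add_one_div {s : ℝ} (hs : 0 ≤ s) (x : ℝ) :
    HasDerivAt (fun t : ℝ => t ^ (s + 1) / (s + 1)) (x ^ s) x := by
  have h := (hasDerivAt_rpow_const (x := x) (Or.inr (by linarith : 1 ≤ s + 1))).div_const (s + 1)
  rwa [add_sub_cancel_right, mul_div_cancel_left₀ _ (by positivity)] at h

lemma rpow_add_one_div_sub_mem_Icc {s a b : ℝ} (hs : 0 ≤ s) (ha : 0 ≤ a) (hab : a ≤ b) :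
    b ^ (s + 1) / (s + 1) - a ^ (s + 1) / (s + 1) ∈
      Set.Icc ((b - a) * a ^ s) ((b - a) * b ^ s) := by
  rcases hab.eq_or_lt with rfl | hlt
  · simp
  obtain ⟨c, ⟨hac, hcb⟩, hc⟩ := exists_hasDerivAt_eq_slope _ _ hlt
    (fun x _ => (hasDerivAt_rpow_add_one_div hs x).continuousAt.continuousWithinAt)
    (fun x _ => hasDerivAt_rpow_add_one_div hs x)
  rw [eq_div_iff (sub_pos.mpr hlt).ne', mul_comm] at hc
  rw [← hc]
  exact ⟨by gcongr, by gcongr; linarith⟩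

lemma rpow_add_one_div_le_sum_Icc_rpow {s : ℝ} (hs : 0 ≤ s) (M : ℕ) :
    (M : ℝ) ^ (s + 1) / (s + 1) ≤ ∑ k ∈ Icc 1 M, (k : ℝ) ^ s := by
  induction M with
  | zero => simp [zero_rpow (by linarith : s + 1 ≠ 0)]
  | succ n ih =>
    rw [sum_Icc_succ_top (by omega), Nat.cast_succ]
    linarith [(rpow_add_one_div_sub_mem_Icc (b := n + 1) hs n.cast_nonneg (by linarith)).2]

lemma sum_Icc_rpow_le_rpow_add_one_div_add_rpow {s : ℝ} (hs : 0 ≤ s) (M : ℕ) :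
    ∑ k ∈ Icc 1 M, (k : ℝ) ^ s ≤ (M : ℝ) ^ (s + 1) / (s + 1) + (M : ℝ) ^ s := by
  induction M with
  | zero => simpa [zero_rpow (by linarith : s + 1 ≠ 0)] using rpow_nonneg le_rfl s
  | succ n ih =>
    rw [sum_Icc_succ_top (by omega), Nat.cast_succ]
    linarith [(rpow_add_one_div_sub_mem_Icc (b := n + 1) hs n.cast_nonneg (by linarith)).1]

lemma abs_sum_Icc_floor_rpow_sub_le {s X : ℝ} (hs : 0 ≤ s) (hX : 0 ≤ X) :
    |∑ k ∈ Icc 1 ⌊X⌋₊, (k : ℝ) ^ s - X ^ (s + 1) / (s + 1)| ≤ X ^ s := by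
  have hMX : (⌊X⌋₊ : ℝ) ≤ X := Nat.floor_le hX
  have hXM : X - ⌊X⌋₊ ≤ 1 := by linarith [Nat.lt_floor_add_one X]
  have hMX' : (⌊X⌋₊ : ℝ) ^ s ≤ X ^ s := by gcongr
  have hmvt := (rpow_add_one_div_sub_mem_Icc hs (Nat.cast_nonneg _) hMX).2
  have : (X - ⌊X⌋₊) * X ^ s ≤ X ^ s := mul_le_of_le_one_left (by positivity) hXM
  rw [abs_le]
  constructor
  · linarith [rpow_add_one_div_le_sum_Icc_rpow hs ⌊X⌋₊]
  · have : (⌊X⌋₊ : ℝ) ^ (s + 1) / (s + 1) ≤ X ^ (s + 1) / (s + 1) := by gcongr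
    linarith [sum_Icc_rpow_le_rpow_add_one_div_add_rpow hs ⌊X⌋₊]

lemma sum_Icc_filter_dvd_eq_sum_mul {M : Type*} [AddCommMonoid M] (f : ℕ → M) {L : ℕ}
    (hL : 0 < L) (N : ℕ) :
    ∑ a ∈ (Icc 1 N).filter (L ∣ ·), f a = ∑ k ∈ Icc 1 (N / L), f (k * L) := by
  refine sum_nbij' (· / L) (· * L) ?_ ?_ ?_ ?_ ?_
  · intro a ha
    simp only [mem_filter, mem_Icc] at ha ⊢
    obtain ⟨⟨ha1, haN⟩, hLa⟩ := ha
    exact ⟨(Nat.one_le_div_iff hL).2 (Nat.le_of_dvd ha1 hLa), Nat.div_le_div_right haN⟩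
  · intro k hk
    simp only [mem_filter, mem_Icc] at hk ⊢
    exact ⟨⟨Nat.mul_pos hk.1 hL, (Nat.le_div_iff_mul_le hL).1 hk.2⟩, dvd_mul_left L k⟩
  · intro a ha
    exact Nat.div_mul_cancel (mem_filter.1 ha).2
  · intro k _
    exact Nat.mul_div_cancel k hL
  · intro a ha
    rw [Nat.div_mul_cancel (mem_filter.1 ha).2]

lemma sum_filter_dvd_sum_divisors_mul {α : Type*} [CommSemiring α] (g f : ℕ → α) (δ N : ℕ) :
    ∑ a ∈ (Icc 1 N).filter (δ ∣ ·), (∑ d ∈ a.divisors, g d) * f a =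
      ∑ d ∈ Icc 1 N, g d * ∑ a ∈ (Icc 1 N).filter (Nat.lcm d δ ∣ ·), f a := by
  simp_rw [sum_mul, mul_sum]
  refine sum_comm' fun a d => ?_
  simp only [mem_filter, mem_Icc, Nat.mem_divisors, Nat.lcm_dvd_iff]
  constructor
  · rintro ⟨⟨⟨ha1, haN⟩, hδa⟩, hda, -⟩
    exact ⟨⟨⟨ha1, haN⟩, hda, hδa⟩, Nat.pos_of_dvd_of_pos hda ha1, (Nat.le_of_dvd ha1 hda).trans haN⟩
  · rintro ⟨⟨⟨ha1, haN⟩, hda, hδa⟩, -⟩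
    exact ⟨⟨⟨ha1, haN⟩, hδa⟩, hda, by omega⟩

lemma abs_sum_filter_dvd_rpow_sub_le {s R : ℝ} (hs : 0 ≤ s) (hR : 0 ≤ R) {L : ℕ} (hL : 0 < L) :
    |∑ a ∈ (Icc 1 ⌊R⌋₊).filter (L ∣ ·), (a : ℝ) ^ s - R ^ (s + 1) / (s + 1) / L| ≤ R ^ s := by
  have hL' : (0 : ℝ) < L := by exact_mod_cast hL
  have hsum : ∑ a ∈ (Icc 1 ⌊R⌋₊).filter (L ∣ ·), (a : ℝ) ^ s =
      (∑ k ∈ Icc 1 ⌊R / L⌋₊, (k : ℝ) ^ s) * (L : ℝ) ^ s := by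
    rw [sum_Icc_filter_dvd_eq_sum_mul _ hL, Nat.floor_div_natCast, sum_mul]
    refine sum_congr rfl fun k _ => ?_
    rw [Nat.cast_mul, mul_rpow k.cast_nonneg hL'.le]
  have hmain : R ^ (s + 1) / (s + 1) / L = (R / L) ^ (s + 1) / (s + 1) * (L : ℝ) ^ s := by
    rw [div_rpow hR hL'.le, rpow_add_one hL'.ne']
    field_simp
  rw [hsum, hmain, ← sub_mul, abs_mul, abs_of_pos (rpow_pos_of_pos hL' s),
    ← div_mul_cancel₀ (R ^ s) (rpow_pos_of_pos hL' s).ne', ← div_rpow hR hL'.le]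
  gcongr
  exact abs_sum_Icc_floor_rpow_sub_le hs (by positivity)

lemma hasSum_ite_dvd_one_div_sq {τ : ℕ} (hτ : 0 < τ) :
    HasSum (fun d : ℕ => if τ ∣ d then 1 / (d : ℝ) ^ 2 else 0) (π ^ 2 / 6 / τ ^ 2) := by
  have hinj : Function.Injective (τ * ·) := mul_right_injective₀ hτ.ne'
  rw [← hinj.hasSum_iff]
  · have hcomp : (fun d : ℕ => if τ ∣ d then 1 / (d : ℝ) ^ 2 else 0) ∘ (τ * ·) =
        fun m : ℕ => 1 / (m : ℝ) ^ 2 / τ ^ 2 := by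
      funext m
      simp only [Function.comp_apply, dvd_mul_right, if_true, Nat.cast_mul]
      ring
    rw [hcomp]
    exact hasSum_zeta_two.div_const _
  · rintro d hd
    rw [if_neg]
    rintro ⟨m, rfl⟩
    exact hd ⟨m, rfl⟩

lemma Nat.sum_totient_filter_dvd (d : ℕ) {δ : ℕ} (hδ : δ ≠ 0) :
    ∑ τ ∈ δ.divisors with τ ∣ d, Nat.totient τ = Nat.gcd d δ := by
  convert Nat.sum_totient (Nat.gcd d δ) using 2
  ext τ
  simp only [mem_filter, Nat.mem_divisors, Nat.dvd_gcd_iff]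
  exact ⟨fun ⟨⟨h1, _⟩, h2⟩ => ⟨⟨h2, h1⟩, Nat.gcd_ne_zero_right hδ⟩,
    fun ⟨⟨h1, h2⟩, _⟩ => ⟨⟨h2, hδ⟩, h1⟩⟩

lemma hasSum_gcd_div_sq {δ : ℕ} (hδ : 0 < δ) :
    HasSum (fun d : ℕ => (Nat.gcd d δ : ℝ) / (d : ℝ) ^ 2)
      (π ^ 2 / 6 * ∑ τ ∈ δ.divisors, (Nat.totient τ : ℝ) / (τ : ℝ) ^ 2) := by
  have hgcd : ∀ d : ℕ, (Nat.gcd d δ : ℝ) / (d : ℝ) ^ 2 =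
      ∑ τ ∈ δ.divisors, (Nat.totient τ : ℝ) * (if τ ∣ d then 1 / (d : ℝ) ^ 2 else 0) := by
    intro d
    simp only [mul_ite, mul_zero, ← sum_filter, ← Nat.sum_totient_filter_dvd d hδ.ne',
      Nat.cast_sum, sum_div, mul_one_div]
  rw [funext hgcd, mul_sum]
  refine hasSum_sum fun τ hτ => ?_
  rw [show π ^ 2 / 6 * ((Nat.totient τ : ℝ) / τ ^ 2) = Nat.totient τ * (π ^ 2 / 6 / τ ^ 2) by ring]
  exact (hasSum_ite_dvd_one_div_sq (Nat.pos_of_mem_divisors hτ)).mul_left _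

lemma abs_sum_Icc_gcd_div_sq_sub_le {δ : ℕ} (hδ : 0 < δ) (N : ℕ) :
    |∑ d ∈ Icc 1 N, (Nat.gcd d δ : ℝ) / (d : ℝ) ^ 2 -
        π ^ 2 / 6 * ∑ τ ∈ δ.divisors, (Nat.totient τ : ℝ) / (τ : ℝ) ^ 2| ≤
      2 * δ / ((N : ℝ) + 1) := by
  set f : ℕ → ℝ := fun d => (Nat.gcd d δ : ℝ) / (d : ℝ) ^ 2
  have hf := hasSum_gcd_div_sq hδ
  have hsplit := hf.summable.sum_add_tsum_nat_add (N + 1)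
  have hrange : ∑ d ∈ range (N + 1), f d = ∑ d ∈ Icc 1 N, f d := by
    rw [range_eq_Ico, sum_eq_sum_Ico_succ_bot N.succ_pos, zero_add, Nat.succ_eq_add_one,
      Ico_add_one_right_eq_Icc]
    simp [f]
  have htail : ∑' i, f (i + (N + 1)) ≤ 2 * δ / (N + 1) := by
    refine Real.tsum_le_of_sum_range_le (fun i => by positivity) fun n => ?_
    calc ∑ i ∈ range n, f (i + (N + 1))
        ≤ ∑ i ∈ range n, (δ : ℝ) * (((N + 1 + i : ℕ) : ℝ) ^ 2)⁻¹ := by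
          refine sum_le_sum fun i _ => ?_
          rw [add_comm i, ← div_eq_mul_inv]
          simp only [f]
          gcongr
          exact_mod_cast Nat.gcd_le_right _ hδ
      _ = δ * ∑ d ∈ Ioo N (N + 1 + n), ((d : ℝ) ^ 2)⁻¹ := by
          rw [← Ico_add_one_left_eq_Ioo, sum_Ico_eq_sum_range, mul_sum, Nat.add_sub_cancel_left]
      _ ≤ δ * (2 / (N + 1)) := by gcongr; exact sum_Ioo_inv_sq_le N _
      _ = 2 * δ / (N + 1) := by ring
  rw [← hf.tsum_eq, ← hsplit, hrange, sub_add_cancel_left, abs_neg,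
    abs_of_nonneg (tsum_nonneg fun i => by positivity)]
  exact htail

lemma sum_Icc_floor_one_div_le_one_add_log {R : ℝ} (hR : 1 ≤ R) :
    ∑ d ∈ Icc 1 ⌊R⌋₊, (1 : ℝ) / d ≤ 1 + Real.log R := by
  have hN : (0 : ℝ) < ⌊R⌋₊ := by exact_mod_cast Nat.floor_pos.2 hR
  calc ∑ d ∈ Icc 1 ⌊R⌋₊, (1 : ℝ) / d = harmonic ⌊R⌋₊ := by
        simp [harmonic_eq_sum_Icc, one_div]
    _ ≤ 1 + Real.log ⌊R⌋₊ := harmonic_le_one_add_log _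
    _ ≤ 1 + Real.log R := by gcongr; exact Nat.floor_le (by linarith)

lemma one_div_mul_div_lcm_eq {d δ : ℕ} (hd : 0 < d) (hδ : 0 < δ) (x : ℝ) :
    1 / (d : ℝ) * (x / Nat.lcm d δ) = x / δ * ((Nat.gcd d δ : ℝ) / (d : ℝ) ^ 2) := by
  have h : (Nat.gcd d δ : ℝ) * Nat.lcm d δ = d * δ := by exact_mod_cast Nat.gcd_mul_lcm d δ
  have : (Nat.lcm d δ : ℝ) ≠ 0 := by exact_mod_cast (Nat.lcm_pos hd hδ).ne'
  have : (d : ℝ) ≠ 0 := by exact_mod_cast hd.ne'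
  have : (δ : ℝ) ≠ 0 := by exact_mod_cast hδ.ne'
  field_simp
  linear_combination -x * h

lemma abs_sum_one_div_mul_sum_filter_lcm_dvd_rpow_sub_le {s : ℝ} (hs : 0 ≤ s) {δ : ℕ}
    (hδ : 0 < δ) {R : ℝ} (hR : 1 ≤ R) :
    |∑ d ∈ Icc 1 ⌊R⌋₊, 1 / (d : ℝ) * ∑ a ∈ (Icc 1 ⌊R⌋₊).filter (Nat.lcm d δ ∣ ·), (a : ℝ) ^ s -
        R ^ (s + 1) / (s + 1) / δ * ∑ d ∈ Icc 1 ⌊R⌋₊, (Nat.gcd d δ : ℝ) / (d : ℝ) ^ 2| ≤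
      R ^ s * (1 + Real.log R) := by
  rw [mul_sum, ← sum_sub_distrib]
  calc _ ≤ ∑ d ∈ Icc 1 ⌊R⌋₊, |1 / (d : ℝ) * (∑ a ∈ (Icc 1 ⌊R⌋₊).filter (Nat.lcm d δ ∣ ·),
            (a : ℝ) ^ s - R ^ (s + 1) / (s + 1) / Nat.lcm d δ)| := by
        refine abs_sum_le_sum_abs _ _ |>.trans_eq (sum_congr rfl fun d hd => ?_)
        rw [mul_sub, one_div_mul_div_lcm_eq (mem_Icc.1 hd).1 hδ]
    _ ≤ ∑ d ∈ Icc 1 ⌊R⌋₊, 1 / (d : ℝ) * R ^ s := by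
        refine sum_le_sum fun d hd => ?_
        rw [abs_mul, abs_of_nonneg (by positivity)]
        gcongr
        exact abs_sum_filter_dvd_rpow_sub_le hs (by linarith) (Nat.lcm_pos (mem_Icc.1 hd).1 hδ)
    _ ≤ (1 + Real.log R) * R ^ s := by
        rw [← sum_mul]
        gcongr
        exact sum_Icc_floor_one_div_le_one_add_log hR
    _ = R ^ s * (1 + Real.log R) := mul_comm _ _

lemma abs_mul_sum_Icc_gcd_div_sq_sub_le {s : ℝ} (hs : 0 ≤ s) {δ : ℕ} (hδ : 0 < δ) {R : ℝ}
    (hR : 0 ≤ R) :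
    |R ^ (s + 1) / (s + 1) / δ * ∑ d ∈ Icc 1 ⌊R⌋₊, (Nat.gcd d δ : ℝ) / (d : ℝ) ^ 2 -
        R ^ (s + 1) / (s + 1) / δ *
          (π ^ 2 / 6 * ∑ τ ∈ δ.divisors, (Nat.totient τ : ℝ) / (τ : ℝ) ^ 2)| ≤ 2 * R ^ s := by
  have hRN : R ≤ ⌊R⌋₊ + 1 := (Nat.lt_floor_add_one R).le
  have : (δ : ℝ) ≠ 0 := by exact_mod_cast hδ.ne'
  rw [← mul_sub, abs_mul, abs_of_nonneg (by positivity)]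
  calc _ ≤ R ^ (s + 1) / (s + 1) / δ * (2 * δ / (⌊R⌋₊ + 1)) := by
        gcongr
        exact abs_sum_Icc_gcd_div_sq_sub_le hδ _
    _ = 2 * (R ^ s * R) / ((s + 1) * (⌊R⌋₊ + 1)) := by
        rw [rpow_add_one' hR (by positivity)]
        field_simp
    _ ≤ 2 * R ^ s := by
        rw [div_le_iff₀ (by positivity)]
        have : R ^ s * R ≤ R ^ s * ((s + 1) * (⌊R⌋₊ + 1)) := by
          gcongr
          nlinarith
        linarith

theorem abs_sum_sigma_neg_one_mul_rpow_sub_le {s : ℝ} (hs : 0 ≤ s) {δ : ℕ} (hδ : 0 < δ) {R : ℝ}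
    (hR : 1 ≤ R) :
    |∑ a ∈ (Icc 1 ⌊R⌋₊).filter (δ ∣ ·), (∑ d ∈ a.divisors, (1 : ℝ) / d) * (a : ℝ) ^ s -
        π ^ 2 / 6 / (s + 1) * (R ^ (s + 1) / δ) *
          ∑ τ ∈ δ.divisors, (Nat.totient τ : ℝ) / (τ : ℝ) ^ 2| ≤ R ^ s * (3 + Real.log R) := by
  rw [sum_filter_dvd_sum_divisors_mul,
    show π ^ 2 / 6 / (s + 1) * (R ^ (s + 1) / δ) * ∑ τ ∈ δ.divisors, (Nat.totient τ : ℝ) / τ ^ 2 =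
      R ^ (s + 1) / (s + 1) / δ * (π ^ 2 / 6 * ∑ τ ∈ δ.divisors, (Nat.totient τ : ℝ) / τ ^ 2) by
        ring]
  refine (abs_sub_le _
    (R ^ (s + 1) / (s + 1) / δ * ∑ d ∈ Icc 1 ⌊R⌋₊, (Nat.gcd d δ : ℝ) / (d : ℝ) ^ 2) _).trans ?_
  linarith [abs_sum_one_div_mul_sum_filter_lcm_dvd_rpow_sub_le hs hδ hR,
    abs_mul_sum_Icc_gcd_div_sq_sub_le hs hδ (by linarith : 0 ≤ R)]

theorem sum_sigma_neg_one_asymp (δ : ℕ) (hδ : 0 < δ) (ε : ℝ) (hε : 0 < ε) :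
    ∃ C : ℝ, 0 < C ∧ ∀ R : ℝ, 2 ≤ R →
      |(∑ a ∈ (Finset.Icc 1 ⌊R⌋₊).filter (fun a => δ ∣ a),
            (∑ d ∈ a.divisors, (1 : ℝ) / d) * (a : ℝ) ^ ((3 : ℝ) / 2)) -
          Real.pi ^ 2 / 15 * (R ^ ((5 : ℝ) / 2) / δ) *
            ∑ τ ∈ δ.divisors, (Nat.totient τ : ℝ) / (τ : ℝ) ^ 2| ≤
        C * R ^ ((3 : ℝ) / 2 + ε) * (δ : ℝ) ^ ε := by
  refine ⟨3 + 1 / ε, by positivity, fun R hR => ?_⟩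
  have hR0 : 0 < R := by linarith
  have h := abs_sum_sigma_neg_one_mul_rpow_sub_le (s := 3 / 2) (by norm_num) hδ (by linarith)
  rw [show (3 : ℝ) / 2 + 1 = 5 / 2 by norm_num, show π ^ 2 / 6 / (5 / 2) = π ^ 2 / 15 by ring] at h
  have hRε : 1 ≤ R ^ ε := one_le_rpow (by linarith) hε.le
  have hlog : Real.log R ≤ 1 / ε * R ^ ε := by
    rw [one_div_mul_eq_div]
    exact log_le_rpow_div hR0.le hε
  calc _ ≤ R ^ ((3 : ℝ) / 2) * (3 + Real.log R) := h
    _ ≤ R ^ ((3 : ℝ) / 2) * ((3 + 1 / ε) * R ^ ε) := by gcongr; linarith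
    _ = (3 + 1 / ε) * R ^ ((3 : ℝ) / 2 + ε) := by rw [rpow_add hR0]; ring
    _ ≤ (3 + 1 / ε) * R ^ ((3 : ℝ) / 2 + ε) * (δ : ℝ) ^ ε :=
      le_mul_of_one_le_right (by positivity) (one_le_rpow (by exact_mod_cast hδ) hε.le)
end
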